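/- Let P₀ = (S, A, p, r) be a finite MDP with discount γ ∈ [0,1), and let Ω_β ⊆ S be such that some optimal policy of P₀, once in Ω_β, never leaves Ω_β. Define the restricted MDP P_β on state set Ω_β ∪ S_add, where S_add is the set of states outside Ω_β reachable in one step from Ω_β, transitions inside Ω_β agree with P₀, states in S_add are absorbing with zero reward, and any transition from Ω_β into S_add receives reward −M for a sufficiently large penalty M (exceeding (max|r| + γ·sup|v₀*|)/(1−γ) plus sup v₀* − inf v₀*). Then the optimal value function of P_β agrees with the optimal value function of P₀ on Ω_β: v_β*(s) = v₀*(s) for all s ∈ Ω_β. -/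

import Mathlib

open Finset

/-- A finite Markov Decision Process. -/
structure MDP (S A : Type) [Fintype S] where
  act : S → Finset A
  act_nonempty : ∀ s, (act s).Nonempty
  p : S → A → S → ℝ
  p_nonneg : ∀ s a s', 0 ≤ p s a s'
  p_sum_one : ∀ s a, ∑ s', p s a s' = 1
  r : S → A → S → ℝ

variable {S A : Type} [Fintype S]

/-- State-action value of a function `v`. -/
def MDP.Q (M : MDP S A) (γ : ℝ) (v : S → ℝ) (s : S) (a : A) : ℝ :=
  ∑ s', M.p s a s' * (M.r s a s' + γ * v s')

/-- Bellman optimality operator. -/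
def MDP.T (M : MDP S A) (γ : ℝ) (v : S → ℝ) (s : S) : ℝ :=
  (M.act s).sup' (M.act_nonempty s) (M.Q γ v s)

/-- Policy evaluation operator. -/
def MDP.Tpi (M : MDP S A) (γ : ℝ) (π : S → A) (v : S → ℝ) (s : S) : ℝ :=
  M.Q γ v s (π s)

/-- `π` is a policy of `M`. -/
def MDP.IsPolicy (M : MDP S A) (π : S → A) : Prop := ∀ s, π s ∈ M.act s

/-
On Ωβ both MDPs share transitions and inner rewards. The absorbing zero-reward states force
`vβ = 0` off Ωβ. Along the optimal policy `π*`, which never leaves Ωβ, the two Bellman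
equations coincide, so `v₀ - vβ` satisfies a γ-contracting bound on Ωβ and hence `v₀ ≤ vβ`.
Conversely, the penalty makes every exit worth less in `Pβ` than continuing in `P₀`
(`-M < γ v₀`), so `vβ - v₀` satisfies the same contracting bound and `vβ ≤ v₀`.
-/

theorem forall_nonpos_of_bound_contracts {ι : Type*} {Ω : Finset ι} {d : ι → ℝ} {γ : ℝ}
    (hγ1 : γ < 1) (h : ∀ c, 0 ≤ c → (∀ i ∈ Ω, d i ≤ c) → ∀ i ∈ Ω, d i ≤ γ * c) :
    ∀ i ∈ Ω, d i ≤ 0 := by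
  rcases Ω.eq_empty_or_nonempty with rfl | hne
  · simp
  set c := max (Ω.sup' hne d) 0
  have hsup : Ω.sup' hne d ≤ γ * c :=
    sup'_le _ _ <| h c (le_max_right _ _) fun i hi => (le_sup' d hi).trans (le_max_left _ _)
  intro i hi
  have hdi := le_sup' d hi
  rcases le_or_gt (Ω.sup' hne d) 0 with hnonpos | hpos
  · linarith
  · rw [show c = Ω.sup' hne d from max_eq_left hpos.le] at hsup
    nlinarith

namespace MDP

theorem Q_le_T (M : MDP S A) {γ : ℝ} {v : S → ℝ} {s : S} {a : A} (ha : a ∈ M.act s) :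
    M.Q γ v s a ≤ M.T γ v s :=
  le_sup' _ ha

theorem Q_le_Q_add_of_le {M N : MDP S A} {γ c : ℝ} {v w : S → ℝ} {s : S} {a : A}
    (hp : ∀ s', M.p s a s' = N.p s a s')
    (h : ∀ s', M.p s a s' ≠ 0 → M.r s a s' + γ * v s' ≤ N.r s a s' + γ * w s' + c) :
    M.Q γ v s a ≤ N.Q γ w s a + c := by
  calc M.Q γ v s a ≤ ∑ s', M.p s a s' * (N.r s a s' + γ * w s' + c) := by
        refine sum_le_sum fun s' _ => ?_
        by_cases hps : M.p s a s' = 0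
        · simp [hps]
        · exact mul_le_mul_of_nonneg_left (h s' hps) (M.p_nonneg s a s')
    _ = N.Q γ w s a + c := by
        simp only [MDP.Q, hp, mul_add, sum_add_distrib, ← sum_mul, N.p_sum_one, one_mul]

theorem p_eq_zero_of_p_self_eq_one (M : MDP S A) {s : S} {a : A} (h : M.p s a s = 1)
    {s' : S} (hs' : s' ≠ s) : M.p s a s' = 0 := by
  classical
  have hrest : ∑ x ∈ univ.erase s, M.p s a x = 0 := by
    have := add_sum_erase univ (M.p s a) (mem_univ s)
    rw [M.p_sum_one, h] at this
    linarith
  exact (sum_eq_zero_iff_of_nonneg fun x _ => M.p_nonneg s a x).mp hrest s'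
    (mem_erase.mpr ⟨hs', mem_univ _⟩)

theorem Q_eq_of_p_self_eq_one (M : MDP S A) {γ : ℝ} {v : S → ℝ} {s : S} {a : A}
    (h : M.p s a s = 1) : M.Q γ v s a = M.r s a s + γ * v s := by
  rw [MDP.Q, sum_eq_single s (fun s' _ hs' => by rw [M.p_eq_zero_of_p_self_eq_one h hs', zero_mul])
    (by simp), h, one_mul]

theorem eq_zero_of_absorbing (M : MDP S A) {γ : ℝ} (hγ1 : γ < 1) {v : S → ℝ} {s : S}
    (habs : ∀ a, M.p s a s = 1) (hr : ∀ a, M.r s a s = 0) (hv : v s = M.T γ v s) : v s = 0 := by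
  have hT : M.T γ v s = γ * v s := by
    rw [MDP.T, sup'_congr (M.act_nonempty s) rfl fun a _ => by
      rw [M.Q_eq_of_p_self_eq_one (habs a), hr a, zero_add], sup'_const]
  rw [hT] at hv
  nlinarith

noncomputable def exitPenaltyThreshold [Fintype A] [Nonempty S] [Nonempty A] (M : MDP S A) (γ : ℝ)
    (v : S → ℝ) : ℝ :=
  (univ.sup' univ_nonempty (fun x : S × A × S => |M.r x.1 x.2.1 x.2.2|) +
      γ * univ.sup' univ_nonempty (fun s => |v s|)) / (1 - γ) +
    univ.sup' univ_nonempty v - univ.inf' univ_nonempty v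

theorem add_mul_pos_of_exitPenaltyThreshold_lt [Fintype A] [Nonempty S] [Nonempty A]
    (M : MDP S A) {γ : ℝ} (hγ0 : 0 ≤ γ) (hγ1 : γ < 1) {v : S → ℝ} {P : ℝ}
    (hP : M.exitPenaltyThreshold γ v < P) (s : S) : 0 < P + γ * v s := by
  set R := univ.sup' univ_nonempty (fun x : S × A × S => |M.r x.1 x.2.1 x.2.2|)
  set V := univ.sup' univ_nonempty (fun s => |v s|)
  have hR : 0 ≤ R := (abs_nonneg _).trans <|
    le_sup' (fun x : S × A × S => |M.r x.1 x.2.1 x.2.2|) (mem_univ (Classical.arbitrary _))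
  have hV : |v s| ≤ V := le_sup' (fun s => |v s|) (mem_univ s)
  have hspread : univ.inf' univ_nonempty v ≤ univ.sup' univ_nonempty v :=
    (inf'_le v (mem_univ s)).trans (le_sup' v (mem_univ s))
  have hdiv : γ * V ≤ (R + γ * V) / (1 - γ) := by
    rw [le_div_iff₀ (by linarith)]
    nlinarith [mul_nonneg (mul_nonneg hγ0 hγ0) ((abs_nonneg _).trans hV)]
  have hγv : γ * -V ≤ γ * v s := mul_le_mul_of_nonneg_left (neg_le_of_abs_le hV) hγ0
  simp only [exitPenaltyThreshold] at hP
  linarith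

theorem le_of_closed_policy {M N : MDP S A} {γ : ℝ} (hγ0 : 0 ≤ γ) (hγ1 : γ < 1) {Ω : Finset S}
    (hp_in : ∀ s ∈ Ω, ∀ a s', N.p s a s' = M.p s a s')
    (hr_in : ∀ s ∈ Ω, ∀ a, ∀ s' ∈ Ω, N.r s a s' = M.r s a s')
    {π : S → A} (hclosed : ∀ s ∈ Ω, ∀ s' ∉ Ω, M.p s (π s) s' = 0)
    {v w : S → ℝ} (hv : ∀ s ∈ Ω, v s = M.Q γ v s (π s)) (hw : ∀ s ∈ Ω, N.Q γ w s (π s) ≤ w s) :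
    ∀ s ∈ Ω, v s ≤ w s := by
  have hdiff := forall_nonpos_of_bound_contracts (d := fun s => v s - w s) hγ1
    fun c _ hle s hs => by
      have hstep := M.Q_le_Q_add_of_le (N := N) (c := γ * c) (v := v) (w := w)
        (fun s' => (hp_in s hs _ s').symm) fun s' hps => by
          have hs' : s' ∈ Ω := by_contra fun hs' => hps (hclosed s hs s' hs')
          rw [hr_in s hs _ s' hs']
          nlinarith [mul_le_mul_of_nonneg_left (hle s' hs') hγ0]
      linarith [hv s hs, hw s hs]
  exact fun s hs => sub_nonpos.mp (hdiff s hs)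

theorem le_of_exit_le {M N : MDP S A} {γ : ℝ} (hγ0 : 0 ≤ γ) (hγ1 : γ < 1) {Ω : Finset S}
    (hact : ∀ s ∈ Ω, N.act s ⊆ M.act s)
    (hp_in : ∀ s ∈ Ω, ∀ a s', N.p s a s' = M.p s a s')
    (hr_in : ∀ s ∈ Ω, ∀ a, ∀ s' ∈ Ω, N.r s a s' = M.r s a s')
    {v w : S → ℝ}
    (hexit : ∀ s ∈ Ω, ∀ a, ∀ s' ∉ Ω, N.r s a s' + γ * w s' ≤ M.r s a s' + γ * v s')
    (hv : ∀ s ∈ Ω, M.T γ v s ≤ v s) (hw : ∀ s ∈ Ω, w s ≤ N.T γ w s) :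
    ∀ s ∈ Ω, w s ≤ v s := by
  have hdiff := forall_nonpos_of_bound_contracts (d := fun s => w s - v s) hγ1
    fun c hc hle s hs => by
      obtain ⟨a, ha, hTa⟩ := exists_mem_eq_sup' (N.act_nonempty s) (N.Q γ w s)
      have hstep := N.Q_le_Q_add_of_le (N := M) (c := γ * c) (v := w) (w := v)
        (hp_in s hs a) fun s' _ => by
          by_cases hs' : s' ∈ Ω
          · rw [hr_in s hs a s' hs']
            nlinarith [mul_le_mul_of_nonneg_left (hle s' hs') hγ0]
          · nlinarith [hexit s hs a s' hs', mul_nonneg hγ0 hc]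
      have hwa : w s ≤ N.Q γ w s a := (hw s hs).trans_eq hTa
      linarith [M.Q_le_T (v := v) (γ := γ) (hact s hs ha), hv s hs]
  exact fun s hs => sub_nonpos.mp (hdiff s hs)

end MDP

theorem restriction_value_agrees_beta_general [Fintype A] [Nonempty S] [Nonempty A]
    (M0 : MDP S A) (γ : ℝ) (hγ0 : 0 ≤ γ) (hγ1 : γ < 1)
    (v0 : S → ℝ) (hv0 : ∀ s, v0 s = M0.T γ v0 s)
    (Ωβ : Finset S)
    -- an optimal policy of the original MDP, closed on Ωβ
    (πstar : S → A) (hπ : M0.IsPolicy πstar)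
    (hopt : ∀ s, v0 s = M0.Q γ v0 s (πstar s))
    (hclosed : ∀ s ∈ Ωβ, ∀ s' ∉ Ωβ, M0.p s (πstar s) s' = 0)
    -- a sufficiently large penalty
    (M : ℝ)
    (hM : (univ.sup' univ_nonempty (fun x : S × A × S => |M0.r x.1 x.2.1 x.2.2|) +
             γ * univ.sup' univ_nonempty (fun s => |v0 s|)) / (1 - γ) +
            univ.sup' univ_nonempty v0 - univ.inf' univ_nonempty v0 < M)
    -- the restricted MDP Pβ
    (Pβ : MDP S A)
    (hact : ∀ s, Pβ.act s = M0.act s)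
    (hp_in : ∀ s ∈ Ωβ, ∀ (a : A) (s' : S), Pβ.p s a s' = M0.p s a s')
    (hp_abs : ∀ s ∉ Ωβ, ∀ a : A, Pβ.p s a s = 1)
    (hr_in : ∀ s ∈ Ωβ, ∀ a : A, ∀ s' ∈ Ωβ, Pβ.r s a s' = M0.r s a s')
    (hr_exit : ∀ s ∈ Ωβ, ∀ a : A, ∀ s' ∉ Ωβ, Pβ.r s a s' = M0.r s a s' - M)
    (hr_abs : ∀ s ∉ Ωβ, ∀ (a : A) (s' : S), Pβ.r s a s' = 0)
    (vβ : S → ℝ) (hvβ : ∀ s, vβ s = Pβ.T γ vβ s) :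
    ∀ s ∈ Ωβ, vβ s = v0 s := by
  have hvβ_out : ∀ s ∉ Ωβ, vβ s = 0 := fun s hs =>
    Pβ.eq_zero_of_absorbing hγ1 (hp_abs s hs) (fun a => hr_abs s hs a s) (hvβ s)
  have hpenalty : ∀ s, 0 < M + γ * v0 s := M0.add_mul_pos_of_exitPenaltyThreshold_lt hγ0 hγ1 hM
  have hlower := MDP.le_of_closed_policy hγ0 hγ1 hp_in hr_in hclosed (fun s _ => hopt s)
    fun s _ => (hvβ s).symm ▸ Pβ.Q_le_T (hact s ▸ hπ s)
  have hupper := MDP.le_of_exit_le hγ0 hγ1 (fun s _ => (hact s).subset) hp_in hr_in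
    (fun s hs a s' hs' => by rw [hr_exit s hs a s' hs', hvβ_out s' hs']; linarith [hpenalty s'])
    (fun s _ => (hv0 s).ge) fun s _ => (hvβ s).le
  exact fun s hs => le_antisymm (hupper s hs) (hlower s hs)

/-- the optimal value function of the restriction of an MDP to a
region `Ωβ` that is closed under an optimal policy (with absorbing zero-reward
boundary states and a sufficiently large exit penalty `M`) agrees with the
optimal value function of the original MDP on `Ωβ`. -/
theorem restriction_value_agrees_beta [Fintype A] [Nonempty S] [Nonempty A]
    (M0 : MDP S A) (γ : ℝ) (hγ0 : 0 ≤ γ) (hγ1 : γ < 1)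
    (v0 : S → ℝ) (hv0 : ∀ s, v0 s = M0.T γ v0 s)
    (Ωβ : Finset S)
    -- an optimal policy of the original MDP, closed on Ωβ
    (πstar : S → A) (hπ : M0.IsPolicy πstar)
    (hopt : ∀ s, v0 s = M0.Q γ v0 s (πstar s))
    (hclosed : ∀ s ∈ Ωβ, ∀ s' ∉ Ωβ, M0.p s (πstar s) s' = 0)
    -- from every state of Ωβ some policy stays in Ωβ
    (hstay : ∃ σ : S → A, M0.IsPolicy σ ∧ ∀ s ∈ Ωβ, ∀ s' ∉ Ωβ, M0.p s (σ s) s' = 0)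
    -- a sufficiently large penalty
    (M : ℝ)
    (hM : (univ.sup' univ_nonempty (fun x : S × A × S => |M0.r x.1 x.2.1 x.2.2|) +
             γ * univ.sup' univ_nonempty (fun s => |v0 s|)) / (1 - γ) +
            univ.sup' univ_nonempty v0 - univ.inf' univ_nonempty v0 < M)
    -- the restricted MDP Pβ
    (Pβ : MDP S A)
    (hact : ∀ s, Pβ.act s = M0.act s)
    (hp_in : ∀ s ∈ Ωβ, ∀ (a : A) (s' : S), Pβ.p s a s' = M0.p s a s')
    (hp_abs : ∀ s ∉ Ωβ, ∀ a : A, Pβ.p s a s = 1)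
    (hr_in : ∀ s ∈ Ωβ, ∀ a : A, ∀ s' ∈ Ωβ, Pβ.r s a s' = M0.r s a s')
    (hr_exit : ∀ s ∈ Ωβ, ∀ a : A, ∀ s' ∉ Ωβ, Pβ.r s a s' = M0.r s a s' - M)
    (hr_abs : ∀ s ∉ Ωβ, ∀ (a : A) (s' : S), Pβ.r s a s' = 0)
    (vβ : S → ℝ) (hvβ : ∀ s, vβ s = Pβ.T γ vβ s) :
    ∀ s ∈ Ωβ, vβ s = v0 s :=
  restriction_value_agrees_beta_general M0 γ hγ0 hγ1 v0 hv0 Ωβ πstar hπ hopt hclosed M hM Pβ hact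
    hp_in hp_abs hr_in hr_exit hr_abs vβ hvβ
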